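/- arXiv:1608.03406 — 2 statements merged into one kernel-verified Lean document; each statement's English description precedes it below -/
import Mathlib

section
/- Let n be a positive integer, and let d_1, ..., d_{n+1} and μ_1, ..., μ_{n+1} be real numbers with μ_{n+1} = 0. Let N_1, ..., N_{n+1} be elements of a commutative ring equipped with a symmetric bilinear intersection form, and suppose for each i that N_{i+1} = N_i + (μ_i - μ_{i+1})·F + (Z_i - Z_{i+1}) where F, Z_1 ≥ Z_2 ≥ ... ≥ Z_{n+1} = 0 are classes such that N_i·F = d_i, and each N_i and N_{i+1} pairs nonnegatively with the effective difference Z_i - Z_{i+1} and N_i² ≥ 0 via nefness (formally: assume N_i·(Z_i − Z_{i+1}) ≥ 0, N_{i+1}·(Z_i − Z_{i+1}) ≥ 0, and N_1² ≥ 0). Then N_{n+1}² ≥ Σ_{i=1}^{n} (d_i + d_{i+1})(μ_i − μ_{i+1}). -/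
/-- Xiao's numerical lemma (Lemma 2 of Xiao): abstract version with a symmetric
bilinear intersection form `B` on a real module `M`. -/
theorem xiao_numerical_lemma
    {M : Type*} [AddCommGroup M] [Module ℝ M]
    (B : M →ₗ[ℝ] M →ₗ[ℝ] ℝ) (hsymm : ∀ x y : M, B x y = B y x)
    (n : ℕ) (hn : 0 < n)
    (d μ : ℕ → ℝ) (N Z : ℕ → M) (F : M)
    (hμtop : μ (n + 1) = 0)
    (hZtop : Z (n + 1) = 0)
    (hrec : ∀ i, 1 ≤ i → i ≤ n →
      N (i + 1) = N i + (μ i - μ (i + 1)) • F + (Z i - Z (i + 1)))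
    (hNF : ∀ i, 1 ≤ i → i ≤ n + 1 → B (N i) F = d i)
    (hNZ : ∀ i, 1 ≤ i → i ≤ n → 0 ≤ B (N i) (Z i - Z (i + 1)))
    (hNZ' : ∀ i, 1 ≤ i → i ≤ n → 0 ≤ B (N (i + 1)) (Z i - Z (i + 1)))
    (hN1 : 0 ≤ B (N 1) (N 1)) :
    ∑ i ∈ Finset.Icc 1 n, (d i + d (i + 1)) * (μ i - μ (i + 1)) ≤
      B (N (n + 1)) (N (n + 1)) := by
  have key : ∀ k, k ≤ n →
      ∑ i ∈ Finset.Icc 1 k, (d i + d (i + 1)) * (μ i - μ (i + 1)) ≤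
        B (N (k + 1)) (N (k + 1)) := by
    intro k
    induction k with
    | zero => intro _; simpa using hN1
    | succ k ih =>
      intro hk
      have hk' : k ≤ n := by omega
      have h1 : 1 ≤ k + 1 := by omega
      have hrec' := hrec (k + 1) h1 hk
      have hd1 := hNF (k + 1) h1 (by omega)
      have hd2 := hNF (k + 2) (by omega) (by omega)
      have hz1 := hNZ (k + 1) h1 hk
      have hz2 := hNZ' (k + 1) h1 hk
      have e1 : B (N (k + 2)) (N (k + 2)) =
          B (N (k + 2)) (N (k + 1)) + (μ (k + 1) - μ (k + 2)) * B (N (k + 2)) F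
            + B (N (k + 2)) (Z (k + 1) - Z (k + 2)) := by
        nth_rewrite 2 [hrec']
        simp [map_add, map_smul, smul_eq_mul]
      have e2 : B (N (k + 2)) (N (k + 1)) =
          B (N (k + 1)) (N (k + 1)) + (μ (k + 1) - μ (k + 2)) * B (N (k + 1)) F
            + B (N (k + 1)) (Z (k + 1) - Z (k + 2)) := by
        rw [hsymm]
        nth_rewrite 1 [hrec']
        simp [map_add, map_smul, smul_eq_mul]
      rw [Finset.sum_Icc_succ_top h1]
      have ihk := ih hk'
      rw [e2, hd1, hd2] at e1
      nlinarith [e1, hz1, hz2, ihk]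
  exact key n le_rfl
end

section
/- Let g ≥ 2 be an integer, n ≥ 2, let r_1 < ... < r_n = g be positive integers, μ_1 > ... > μ_n ≥ 0 real numbers with μ_{n+1} = 0, and d_1 ≤ d_2 ≤ ... ≤ d_n = d_{n+1} = 2g−2 reals with d_i ≥ 2r_i − 2 for all i. Set χ = Σ_{i=1}^n r_i(μ_i − μ_{i+1}) and suppose K² ≥ Σ_{i=1}^{n-1}(d_i + d_{i+1})(μ_i − μ_{i+1}) + (4g−4)μ_n and K² ≥ (2g−2)(μ_1 + μ_n). Then K² ≥ ((4g−4)/g)·χ. -/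
lemma tele_aux (μ : ℕ → ℝ) : ∀ m, ∑ i ∈ Finset.Icc 1 m, (μ i - μ (i + 1)) = μ 1 - μ (m + 1)
  | 0 => by simp
  | m + 1 => by
    rw [Finset.sum_Icc_succ_top (by omega), tele_aux μ m]; ring

/-- Numerical elimination argument in Xiao's proof of the slope inequality
`K² ≥ (4g−4)/g · χ`. -/
theorem slope_inequality_numerical
    (g n : ℕ) (hg : 2 ≤ g) (hn : 2 ≤ n)
    (r : ℕ → ℕ) (μ d : ℕ → ℝ) (K2 χ : ℝ)
    (hrpos : ∀ i, 1 ≤ i → i ≤ n → 0 < r i)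
    (hrmono : ∀ i, 1 ≤ i → i < n → r i < r (i + 1))
    (hrn : r n = g)
    (hμmono : ∀ i, 1 ≤ i → i < n → μ (i + 1) < μ i)
    (hμn : 0 ≤ μ n) (hμtop : μ (n + 1) = 0)
    (hdmono : ∀ i, 1 ≤ i → i < n → d i ≤ d (i + 1))
    (hdn : d n = 2 * (g : ℝ) - 2) (hdn1 : d (n + 1) = 2 * (g : ℝ) - 2)
    (hclifford : ∀ i, 1 ≤ i → i ≤ n → 2 * (r i : ℝ) - 2 ≤ d i)
    (hχ : χ = ∑ i ∈ Finset.Icc 1 n, (r i : ℝ) * (μ i - μ (i + 1)))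
    (h1 : ∑ i ∈ Finset.Icc 1 (n - 1), (d i + d (i + 1)) * (μ i - μ (i + 1))
            + (4 * (g : ℝ) - 4) * μ n ≤ K2)
    (h2 : (2 * (g : ℝ) - 2) * (μ 1 + μ n) ≤ K2) :
    (4 * (g : ℝ) - 4) / g * χ ≤ K2 := by
  have hn1 : n - 1 + 1 = n := by omega
  -- Step 1: pointwise comparison on Icc 1 (n-1)
  have key : ∀ i ∈ Finset.Icc 1 (n - 1),
      (4 * (r i : ℝ) - 2) * (μ i - μ (i + 1))
        ≤ (d i + d (i + 1)) * (μ i - μ (i + 1)) := by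
    intro i hi
    rw [Finset.mem_Icc] at hi
    have hiln : i < n := by omega
    have hΔ : 0 ≤ μ i - μ (i + 1) := le_of_lt (sub_pos.mpr (hμmono i hi.1 hiln))
    have hc1 : 2 * (r i : ℝ) - 2 ≤ d i := hclifford i hi.1 (by omega)
    have hc2 : 2 * (r (i + 1) : ℝ) - 2 ≤ d (i + 1) := hclifford (i + 1) (by omega) (by omega)
    have hr : (r i : ℝ) + 1 ≤ (r (i + 1) : ℝ) := by
      exact_mod_cast hrmono i hi.1 hiln
    have : 4 * (r i : ℝ) - 2 ≤ d i + d (i + 1) := by linarith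
    exact mul_le_mul_of_nonneg_right this hΔ
  have sumle : ∑ i ∈ Finset.Icc 1 (n - 1), (4 * (r i : ℝ) - 2) * (μ i - μ (i + 1))
      ≤ ∑ i ∈ Finset.Icc 1 (n - 1), (d i + d (i + 1)) * (μ i - μ (i + 1)) :=
    Finset.sum_le_sum key
  -- telescoping
  have tele : ∑ i ∈ Finset.Icc 1 (n - 1), (μ i - μ (i + 1)) = μ 1 - μ n := by
    have := tele_aux μ (n - 1)
    rwa [hn1] at this
  -- split χ
  have split : χ = (∑ i ∈ Finset.Icc 1 (n - 1), (r i : ℝ) * (μ i - μ (i + 1)))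
      + (g : ℝ) * μ n := by
    rw [hχ, ← hn1, Finset.sum_Icc_succ_top (by omega : 1 ≤ n - 1 + 1)]
    rw [hn1, hrn, hμtop]
    ring
  -- rewrite the lower sum
  have expand : ∑ i ∈ Finset.Icc 1 (n - 1), (4 * (r i : ℝ) - 2) * (μ i - μ (i + 1))
      = 4 * (∑ i ∈ Finset.Icc 1 (n - 1), (r i : ℝ) * (μ i - μ (i + 1)))
        - 2 * (μ 1 - μ n) := by
    rw [← tele, Finset.mul_sum, Finset.mul_sum, ← Finset.sum_sub_distrib]
    exact Finset.sum_congr rfl fun i _ => by ring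
  -- combine: K2 ≥ 4χ − 2(μ1 + μn)
  have hA : 4 * χ - 2 * (μ 1 + μ n) ≤ K2 := by
    have := sumle
    rw [expand] at this
    rw [split]
    linarith
  -- final elimination
  have hg' : (2 : ℝ) ≤ (g : ℝ) := by exact_mod_cast hg
  have hgpos : (0 : ℝ) < (g : ℝ) := by linarith
  rw [div_mul_eq_mul_div, div_le_iff₀ hgpos]
  nlinarith [mul_le_mul_of_nonneg_left hA (by linarith : (0:ℝ) ≤ (g:ℝ) - 1), h2]
end
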